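/- (Power factorization.) Suppose R_n^{(α)}·L_n^{(α)} = L_n^{(α+θ)}·R_n^{(α+1)} holds for all α ∈ ℕ. For k ∈ ℕ set P_n^{(k)} := L_n^{(0)}·L_n^{(1)}⋯L_n^{(k−1)} and for α ∈ ℕ set Q_n^{(α)} := R_n^{(θ(α−1))}·R_n^{(θ(α−2))}⋯R_n^{(θ)}·R_n^{(0)} (empty products equal the identity matrix). Then for all α ∈ ℕ: (J_n^{(0)})^α = P_n^{(θα)}·Q_n^{(α)}. -/
import Mathlib


open Matrix Filter

/-- The block upper bidiagonal matrix `R_n^{(α)}`: diagonal blocks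
`q_1^{(α)}, …, q_n^{(α)}`, superdiagonal blocks `I_p`, zero elsewhere,
realized as an `np × np` real matrix indexed by `Fin n × Fin p`. -/
def blkR (p n : ℕ) (q : ℕ → ℕ → Matrix (Fin p) (Fin p) ℝ) (α : ℕ) :
    Matrix (Fin n × Fin p) (Fin n × Fin p) ℝ :=
  Matrix.of fun u v =>
    if u.1 = v.1 then q ((u.1 : ℕ) + 1) α u.2 v.2
    else if (v.1 : ℕ) = (u.1 : ℕ) + 1 then (if u.2 = v.2 then 1 else 0) else 0

/-- The block lower bidiagonal matrix `L_n^{(α)}`: diagonal blocks `I_p`,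
subdiagonal blocks `e_1^{(α)}, …, e_{n-1}^{(α)}`, zero elsewhere. -/
def blkL (p n : ℕ) (e : ℕ → ℕ → Matrix (Fin p) (Fin p) ℝ) (α : ℕ) :
    Matrix (Fin n × Fin p) (Fin n × Fin p) ℝ :=
  Matrix.of fun u v =>
    if u.1 = v.1 then (if u.2 = v.2 then 1 else 0)
    else if (u.1 : ℕ) = (v.1 : ℕ) + 1 then e (u.1 : ℕ) α u.2 v.2 else 0

/-- The discrete non-commutative hungry Toda-II lattice with zero boundary
conditions, at time step `α`. -/
def TodaStep (p θ : ℕ) (q e : ℕ → ℕ → Matrix (Fin p) (Fin p) ℝ) (n α : ℕ) : Prop :=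
  (∀ m : ℕ, 1 ≤ m → m ≤ n → q m (α + 1) + e (m - 1) (α + θ) = q m α + e m α) ∧
  (∀ m : ℕ, 1 ≤ m → m ≤ n - 1 → e m (α + θ) * q m (α + 1) = q (m + 1) α * e m α)

/-- The block Hessenberg matrix
`J_n^{(α)} = L_n^{(α)} · L_n^{(α+1)} ⋯ L_n^{(α+θ-1)} · R_n^{(α)}`. -/
def blkJ (p n θ : ℕ) (q e : ℕ → ℕ → Matrix (Fin p) (Fin p) ℝ) (α : ℕ) :
    Matrix (Fin n × Fin p) (Fin n × Fin p) ℝ :=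
  ((List.range θ).map fun i => blkL p n e (α + i)).prod * blkR p n q α

lemma mapProd_congr {M : Type*} [Monoid M] (F : ℕ → M) (f g : ℕ → ℕ)
    (l : List ℕ) (h : ∀ i, f i = g i) :
    (l.map fun i => F (f i)).prod = (l.map fun i => F (g i)).prod := by
  have hfg : (fun i => F (f i)) = fun i => F (g i) := funext fun i => by rw [h i]
  rw [hfg]

lemma pushRun (p n θ : ℕ) (q e : ℕ → ℕ → Matrix (Fin p) (Fin p) ℝ)
    (hcompat : ∀ α : ℕ,
      blkR p n q α * blkL p n e α = blkL p n e (α + θ) * blkR p n q (α + 1)) :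
    ∀ k β : ℕ,
      blkR p n q β * ((List.range k).map fun i => blkL p n e (β + i)).prod
        = ((List.range k).map fun i => blkL p n e (β + θ + i)).prod
            * blkR p n q (β + k) := by
  intro k
  induction k with
  | zero => intro β; simp
  | succ k ih =>
    intro β
    rw [List.range_succ, List.map_append, List.prod_append,
      List.map_append, List.prod_append]
    simp only [List.map_cons, List.map_nil, List.prod_cons, List.prod_nil, mul_one]
    rw [← mul_assoc, ih β, mul_assoc, hcompat (β + k),
      show β + k + θ = β + θ + k by ring, show β + (k + 1) = β + k + 1 from rfl,
      mul_assoc]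

lemma QLrun (p n θ : ℕ) (q e : ℕ → ℕ → Matrix (Fin p) (Fin p) ℝ)
    (hcompat : ∀ α : ℕ,
      blkR p n q α * blkL p n e α = blkL p n e (α + θ) * blkR p n q (α + 1)) :
    ∀ α : ℕ,
      ((List.range α).map fun i => blkR p n q (θ * (α - 1 - i))).prod
          * ((List.range θ).map fun i => blkL p n e i).prod
        = ((List.range θ).map fun i => blkL p n e (θ * α + i)).prod
            * ((List.range α).map fun i => blkR p n q (θ * (α - i))).prod := by
  intro α
  induction α with
  | zero => simp
  | succ α ih =>
    have hQ : ((List.range (α + 1)).map fun i => blkR p n q (θ * (α + 1 - 1 - i))).prod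
        = blkR p n q (θ * α)
            * ((List.range α).map fun i => blkR p n q (θ * (α - 1 - i))).prod := by
      rw [List.range_succ_eq_map, List.map_cons, List.prod_cons, List.map_map]
      have hhead : θ * (α + 1 - 1 - 0) = θ * α := by
        have h : α + 1 - 1 - 0 = α := by omega
        rw [h]
      rw [hhead]
      congr 1
      simp only [Function.comp_def]
      exact mapProd_congr (blkR p n q) (fun i => θ * (α + 1 - 1 - (i + 1)))
        (fun i => θ * (α - 1 - i)) _ (fun i => by
          show θ * (α + 1 - 1 - (i + 1)) = θ * (α - 1 - i)
          congr 1; omega)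
    have hS : ((List.range (α + 1)).map fun i => blkR p n q (θ * (α + 1 - i))).prod
        = blkR p n q (θ * (α + 1))
            * ((List.range α).map fun i => blkR p n q (θ * (α - i))).prod := by
      rw [List.range_succ_eq_map, List.map_cons, List.prod_cons, List.map_map]
      have hhead : θ * (α + 1 - 0) = θ * (α + 1) := by
        have h : α + 1 - 0 = α + 1 := by omega
        rw [h]
      rw [hhead]
      congr 1
      simp only [Function.comp_def]
      exact mapProd_congr (blkR p n q) (fun i => θ * (α + 1 - (i + 1)))
        (fun i => θ * (α - i)) _ (fun i => by
          show θ * (α + 1 - (i + 1)) = θ * (α - i)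
          congr 1; omega)
    rw [hQ, hS, mul_assoc, ih, ← mul_assoc]
    have hpush := pushRun p n θ q e hcompat θ (θ * α)
    have h0 : ((List.range θ).map fun i => blkL p n e (θ * α + i)).prod
        = ((List.range θ).map fun i => blkL p n e (θ * α + i)).prod := rfl
    rw [hpush, show θ * α + θ = θ * (α + 1) by ring, mul_assoc]

/-- power factorization
`(J_n^{(0)})^α = P_n^{(θα)} · Q_n^{(α)}`, where
`P_n^{(k)} = L_n^{(0)} ⋯ L_n^{(k-1)}` and
`Q_n^{(α)} = R_n^{(θ(α-1))} ⋯ R_n^{(θ)} · R_n^{(0)}`. -/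
theorem statement16 (p n θ : ℕ) (hp : 1 ≤ p) (hn : 1 ≤ n) (hθ : 1 ≤ θ)
    (q e : ℕ → ℕ → Matrix (Fin p) (Fin p) ℝ)
    (hbd : ∀ α : ℕ, e 0 α = 0 ∧ e n α = 0)
    (hcompat : ∀ α : ℕ,
      blkR p n q α * blkL p n e α = blkL p n e (α + θ) * blkR p n q (α + 1)) :
    ∀ α : ℕ,
      blkJ p n θ q e 0 ^ α
        = ((List.range (θ * α)).map fun i => blkL p n e i).prod
          * ((List.range α).map fun i => blkR p n q (θ * (α - 1 - i))).prod := by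
  intro α
  induction α with
  | zero => simp
  | succ α ih =>
    rw [pow_succ, ih]
    have hJ : blkJ p n θ q e 0
        = ((List.range θ).map fun i => blkL p n e i).prod * blkR p n q 0 := by
      unfold blkJ
      simp [zero_add]
    rw [hJ]
    have hP : ((List.range (θ * (α + 1))).map fun i => blkL p n e i).prod
        = ((List.range (θ * α)).map fun i => blkL p n e i).prod
            * ((List.range θ).map fun i => blkL p n e (θ * α + i)).prod := by
      rw [show θ * (α + 1) = θ * α + θ by ring, List.range_add, List.map_append,
        List.prod_append, List.map_map]
      rfl
    have hQ : ((List.range (α + 1)).map fun i => blkR p n q (θ * (α + 1 - 1 - i))).prod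
        = ((List.range α).map fun i => blkR p n q (θ * (α - i))).prod
            * blkR p n q 0 := by
      rw [List.range_succ, List.map_append, List.prod_append]
      simp only [List.map_cons, List.map_nil, List.prod_cons, List.prod_nil, mul_one]
      have htail : θ * (α + 1 - 1 - α) = 0 := by
        have h : α + 1 - 1 - α = 0 := by omega
        rw [h, Nat.mul_zero]
      rw [htail]
      congr 1
    rw [hP, hQ]
    calc ((List.range (θ * α)).map fun i => blkL p n e i).prod
          * ((List.range α).map fun i => blkR p n q (θ * (α - 1 - i))).prod
          * (((List.range θ).map fun i => blkL p n e i).prod * blkR p n q 0)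
        = ((List.range (θ * α)).map fun i => blkL p n e i).prod
          * (((List.range α).map fun i => blkR p n q (θ * (α - 1 - i))).prod
            * ((List.range θ).map fun i => blkL p n e i).prod) * blkR p n q 0 := by
          simp only [mul_assoc]
      _ = _ := by
          rw [QLrun p n θ q e hcompat α]
          simp only [mul_assoc]
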